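/- arXiv:2309.10265 — 5 statements merged into one kernel-verified Lean document; each statement's English description precedes it below -/
import Mathlib

section
/- Let q be a power of a prime p, let Q ∈ 𝔽_q[X] be monic irreducible with Q ≠ X, let e be a positive integer, and let ℓ be an integer coprime to ord(Q)·p^{⌈log_p e⌉}. Let α be the 𝔽_q-linear map on V = 𝔽_q[X]/(Q^e) given by multiplication by X. Then the minimal polynomial of α^ℓ on V is pow_ℓ(Q)^e, where pow_ℓ(Q) is the minimal polynomial over 𝔽_q of ξ^ℓ for ξ a root of Q in an algebraic closure. -/
open Polynomial

theorem core_aux (p : ℕ) (hp : p.Prime) (F : Type) [Field F] [Fintype F] [CharP F p]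
    (Q : F[X]) (hQm : Q.Monic) (hQirr : Irreducible Q)
    (e : ℕ) (he : 0 < e)
    (l : ℕ) (hl0 : 0 < l) (hpl : 1 < e → ¬ p ∣ l)
    (ξ : AlgebraicClosure F) (hξ : Polynomial.aeval ξ Q = 0) (hξ0 : ξ ≠ 0) :
    minpoly F (AdjoinRoot.root (Q ^ e) ^ l) = (minpoly F (ξ ^ l)) ^ e := by
  set S := minpoly F (ξ ^ l) with hS
  have hS0 : Polynomial.aeval (ξ ^ l) S = 0 := minpoly.aeval F (ξ ^ l)
  have hξint : IsIntegral F ξ := Algebra.IsIntegral.isIntegral ξ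
  have hSint : IsIntegral F (ξ ^ l) := hξint.pow l
  have hSmonic : S.Monic := minpoly.monic hSint
  have hQmin : Q = minpoly F ξ := minpoly.eq_of_irreducible_of_monic hQirr hξ hQm
  have hQ0 : Q ≠ 0 := hQm.ne_zero
  have hQprime : Prime Q := hQirr.prime
  -- basic divisibility correspondence
  have key1 : ∀ W : F[X], Q ∣ W.comp (X ^ l) ↔ S ∣ W := by
    intro W
    constructor
    · intro h
      apply minpoly.dvd
      have h0 : Polynomial.aeval ξ (W.comp (X ^ l)) = 0 := by
        obtain ⟨c, hc⟩ := h
        rw [hc, map_mul, hξ, zero_mul]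
      rwa [aeval_comp, map_pow, aeval_X] at h0
    · rintro ⟨c, rfl⟩
      rw [hQmin]
      apply minpoly.dvd
      rw [aeval_comp, map_pow, aeval_X, map_mul, hS0, zero_mul]
  have key : ∀ P : F[X], Q ^ e ∣ P.comp (X ^ l) ↔ S ^ e ∣ P := by
    rcases lt_or_ge 1 e with hgt | hle
    · -- e ≥ 2 : exact multiplicity argument
      have hpl' : ¬ p ∣ l := hpl hgt
      obtain ⟨T, hT⟩ : Q ∣ S.comp (X ^ l) := (key1 S).mpr dvd_rfl
      have hQT : ¬ Q ∣ T := by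
        intro hdvd
        -- then Q^2 divides S.comp (X ^ l), hence Q divides its derivative
        have h2 : Q ^ 2 ∣ S.comp (X ^ l) := by
          obtain ⟨T', rfl⟩ := hdvd
          exact ⟨T', by rw [hT]; ring⟩
        obtain ⟨H, hH⟩ := h2
        have hQd : Q ∣ derivative (S.comp (X ^ l)) := by
          rw [hH, derivative_mul, derivative_pow]
          refine dvd_add (Dvd.dvd.mul_right ?_ H)
            (Dvd.dvd.mul_right (dvd_pow_self Q two_ne_zero) _)
          exact Dvd.dvd.mul_right
            (Dvd.dvd.mul_left (dvd_pow_self Q (by norm_num : 2 - 1 ≠ 0)) _) _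
        have hz : Polynomial.aeval ξ (derivative (S.comp (X ^ l))) = 0 := by
          obtain ⟨c, hc⟩ := hQd
          rw [hc, map_mul, hξ, zero_mul]
        rw [derivative_comp, derivative_X_pow, map_mul, aeval_comp, map_pow, aeval_X,
          map_mul, aeval_C, map_pow, aeval_X] at hz
        -- hz : (l : AC) * ξ^(l-1) * S'(ξ^l) = 0
        have h1 : (algebraMap F (AlgebraicClosure F)) ((l : ℕ) : F) ≠ 0 := by
          intro h
          have : ((l : ℕ) : F) = 0 := by
            exact (map_eq_zero_iff _ (algebraMap F (AlgebraicClosure F)).injective).mp h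
          exact hpl' ((CharP.cast_eq_zero_iff F p l).mp this)
        have h2' : ξ ^ (l - 1) ≠ 0 := pow_ne_zero _ hξ0
        have h3 : Polynomial.aeval (ξ ^ l) (derivative S) ≠ 0 := by
          have hsep : S.Separable := Algebra.IsSeparable.isSeparable F (ξ ^ l)
          obtain ⟨a, b, hab⟩ := hsep
          intro hzero
          have := congrArg (Polynomial.aeval (ξ ^ l)) hab
          rw [map_add, map_mul, map_mul, hS0, mul_zero, hzero, mul_zero,
            add_zero, map_one] at this
          exact zero_ne_one this
        exact (mul_ne_zero (mul_ne_zero h1 h2') h3) hz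
      intro P
      constructor
      · -- forward: by induction
        have main : ∀ n : ℕ, ∀ P : F[X], Q ^ n ∣ P.comp (X ^ l) → S ^ n ∣ P := by
          intro n
          induction n with
          | zero => intro P _; simpa using one_dvd P
          | succ n ih =>
            intro P hP
            have h1 : S ∣ P := (key1 P).mp ((dvd_pow_self Q n.succ_ne_zero).trans hP)
            obtain ⟨P₁, rfl⟩ := h1
            have hcomp : (S * P₁).comp (X ^ l) = Q * (T * P₁.comp (X ^ l)) := by
              rw [mul_comp, hT]; ring
            rw [hcomp, pow_succ'] at hP
            have h2 : Q ^ n ∣ T * P₁.comp (X ^ l) := (mul_dvd_mul_iff_left hQ0).mp hP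
            have h3 : Q ^ n ∣ P₁.comp (X ^ l) := hQprime.pow_dvd_of_dvd_mul_left n hQT h2
            rw [pow_succ']
            exact mul_dvd_mul_left S (ih P₁ h3)
        exact main e P
      · rintro ⟨W, rfl⟩
        rw [mul_comp, pow_comp, hT, mul_pow]
        exact Dvd.dvd.mul_right (Dvd.dvd.mul_right dvd_rfl _) _
    · -- e = 1
      have he1 : e = 1 := le_antisymm hle he
      subst he1
      intro P
      simpa [pow_one] using key1 P
  -- now conclude via minpoly.unique
  have hcomp : ∀ P : F[X], Polynomial.aeval (AdjoinRoot.root (Q ^ e) ^ l) P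
      = AdjoinRoot.mk (Q ^ e) (P.comp (X ^ l)) := by
    intro P
    rw [← AdjoinRoot.aeval_eq, aeval_comp, map_pow, aeval_X]
  refine (minpoly.unique F _ (hSmonic.pow e) ?_ ?_).symm
  · rw [hcomp, AdjoinRoot.mk_eq_zero]
    exact (key _).mpr dvd_rfl
  · intro q hq hq0
    rw [hcomp, AdjoinRoot.mk_eq_zero] at hq0
    exact Polynomial.degree_le_of_dvd ((key q).mp hq0) hq.ne_zero

set_option maxHeartbeats 1000000 in
theorem stmt8 (p : ℕ) (hp : p.Prime) (F : Type) [Field F] [Fintype F] [CharP F p]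
    (Q : F[X]) (hQm : Q.Monic) (hQirr : Irreducible Q) (hQX : Q ≠ X)
    (e : ℕ) (he : 0 < e)
    (N : ℕ) (hNpos : 0 < N) (hQdvd : Q ∣ X ^ N - 1)
    (hNmin : ∀ k : ℕ, 0 < k → Q ∣ X ^ k - 1 → N ≤ k)
    (ℓ : ℤ) (hℓ : IsCoprime ℓ ((N * p ^ Nat.clog p e : ℕ) : ℤ))
    (u : (AdjoinRoot (Q ^ e))ˣ) (hu : (u : AdjoinRoot (Q ^ e)) = AdjoinRoot.root (Q ^ e))
    (ξ : AlgebraicClosure F) (hξ : Polynomial.aeval ξ Q = 0) :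
    minpoly F ((LinearMap.mulLeft F ((u ^ ℓ : (AdjoinRoot (Q ^ e))ˣ) : AdjoinRoot (Q ^ e))
        : Module.End F (AdjoinRoot (Q ^ e))))
      = (minpoly F (ξ ^ ℓ)) ^ e := by
  haveI : Fact p.Prime := ⟨hp⟩
  set c := Nat.clog p e with hc
  set m := N * p ^ c with hm
  have hm0 : 0 < m := Nat.mul_pos hNpos (pow_pos hp.pos c)
  have hmZ0 : (m : ℤ) ≠ 0 := by exact_mod_cast hm0.ne'
  -- ξ^N = 1
  have hξN : ξ ^ N = 1 := by
    obtain ⟨c', hc'⟩ := hQdvd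
    have : Polynomial.aeval ξ ((X : F[X]) ^ N - 1) = 0 := by
      rw [hc', map_mul, hξ, zero_mul]
    rw [map_sub, map_pow, aeval_X, map_one, sub_eq_zero] at this
    exact this
  have hξ0 : ξ ≠ 0 := by
    intro h
    rw [h, zero_pow hNpos.ne'] at hξN
    exact zero_ne_one hξN
  have hξm : ξ ^ m = 1 := by
    rw [hm, pow_mul, hξN, one_pow]
  -- root^m = 1
  have hrootm : (AdjoinRoot.root (Q ^ e)) ^ m = 1 := by
    have hdvd : Q ^ e ∣ (X : F[X]) ^ m - 1 := by
      have heq : ((X : F[X]) ^ m - 1) = ((X : F[X]) ^ N - 1) ^ (p ^ c) := by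
        rw [sub_pow_char_pow, one_pow, ← pow_mul, hm]
      rw [heq]
      exact (pow_dvd_pow Q (Nat.le_pow_clog hp.one_lt e)).trans
        (pow_dvd_pow_of_dvd hQdvd (p ^ c))
    have : Polynomial.aeval (AdjoinRoot.root (Q ^ e)) ((X : F[X]) ^ m - 1) = 0 := by
      rw [AdjoinRoot.aeval_eq, AdjoinRoot.mk_eq_zero]
      exact hdvd
    rw [map_sub, map_pow, aeval_X, map_one, sub_eq_zero] at this
    exact this
  have hum : u ^ m = 1 := by
    ext
    rw [Units.val_pow_eq_pow_val, hu, hrootm, Units.val_one]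
  -- the natural exponent l
  set l : ℕ := (ℓ % m).toNat + m with hl
  have hl0 : 0 < l := by positivity
  have hlZ : (l : ℤ) = ℓ % m + m := by
    rw [hl]
    push_cast [Int.toNat_of_nonneg (Int.emod_nonneg ℓ hmZ0)]
    ring
  -- u ^ ℓ = u ^ l
  have hudecomp : ∀ (G : Type) [inst : Group G] (g : G), g ^ (m : ℕ) = 1 → g ^ ℓ = g ^ l := by
    intro G _ g hg
    have h1 : g ^ (m : ℤ) = 1 := by rw [zpow_natCast, hg]
    calc g ^ ℓ = g ^ ((m : ℤ) * (ℓ / m) + ℓ % m) := by rw [Int.mul_ediv_add_emod]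
    _ = (g ^ (m : ℤ)) ^ (ℓ / m) * g ^ (ℓ % m) := by rw [zpow_add, zpow_mul]
    _ = g ^ (ℓ % m) := by rw [h1, one_zpow, one_mul]
    _ = g ^ (ℓ % m) * g ^ (m : ℤ) := by rw [h1, mul_one]
    _ = g ^ ((l : ℕ) : ℤ) := by rw [← zpow_add, hlZ]
    _ = g ^ (l : ℕ) := zpow_natCast g l
  have huℓ : u ^ ℓ = u ^ l := hudecomp _ u hum
  -- ξ ^ ℓ = ξ ^ l
  have hξu : ξ ^ ℓ = ξ ^ l := by
    have hunit : IsUnit ξ := IsUnit.of_pow_eq_one hξm hm0.ne'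
    obtain ⟨v, hv⟩ := hunit
    have hvm : v ^ m = 1 := by ext; rw [Units.val_pow_eq_pow_val, hv, hξm, Units.val_one]
    have := hudecomp ((AlgebraicClosure F)ˣ) v hvm
    calc ξ ^ ℓ = ((v ^ ℓ : (AlgebraicClosure F)ˣ) : AlgebraicClosure F) := by
          rw [← hv, Units.val_zpow_eq_zpow_val]
    _ = ((v ^ l : (AlgebraicClosure F)ˣ) : AlgebraicClosure F) := by rw [this]
    _ = ξ ^ l := by rw [Units.val_pow_eq_pow_val, hv]
  -- p does not divide l when e > 1
  have hpl : 1 < e → ¬ p ∣ l := by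
    intro he2 hdvd
    have hc1 : 0 < c := Nat.clog_pos hp.one_lt he2
    have hpm : (p : ℤ) ∣ (m : ℤ) := by
      exact_mod_cast (dvd_pow_self p hc1.ne').trans (dvd_mul_left (p ^ c) N)
    have hplZ : (p : ℤ) ∣ (l : ℤ) := by exact_mod_cast hdvd
    have hpmod : (p : ℤ) ∣ ℓ % m := by
      have := dvd_sub hplZ hpm
      rwa [hlZ, add_sub_cancel_right] at this
    have hpℓ : (p : ℤ) ∣ ℓ := by
      have : ℓ = (m : ℤ) * (ℓ / m) + ℓ % m := (Int.mul_ediv_add_emod ℓ m).symm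
      rw [this]
      exact dvd_add (Dvd.dvd.mul_right hpm _) hpmod
    obtain ⟨a, b, hab⟩ := hℓ
    have : (p : ℤ) ∣ 1 := by
      rw [← hab]
      exact dvd_add (Dvd.dvd.mul_left hpℓ a) (Dvd.dvd.mul_left hpm b)
    exact ((Nat.prime_iff_prime_int.mp hp).not_dvd_one this)
  -- glue
  rw [huℓ, hξu]
  have hml : (LinearMap.mulLeft F ((u ^ l : (AdjoinRoot (Q ^ e))ˣ) : AdjoinRoot (Q ^ e))
      : Module.End F (AdjoinRoot (Q ^ e)))
      = Algebra.lmul F (AdjoinRoot (Q ^ e)) ((u ^ l : (AdjoinRoot (Q ^ e))ˣ) : AdjoinRoot (Q ^ e)) := rfl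
  rw [hml, minpoly.algHom_eq _ Algebra.lmul_injective]
  have hval : ((u ^ l : (AdjoinRoot (Q ^ e))ˣ) : AdjoinRoot (Q ^ e)) = AdjoinRoot.root (Q ^ e) ^ l := by
    rw [Units.val_pow_eq_pow_val, hu]
  rw [hval]
  exact core_aux p hp F Q hQm hQirr e he l hl0 hpl ξ hξ hξ0
end

section
/- Let q be a prime power, Q ∈ 𝔽_q[X] monic irreducible with Q ≠ X, and e a positive integer. Then X^{ord(Q)} ≡ 1 + A·Q (mod Q^e) for some polynomial A ∈ 𝔽_q[X] with Q ∤ A; in particular, the image of X^{ord(Q)} − 1 in 𝔽_q[X]/(Q^e) generates the same ideal as the image of Q. -/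
open Polynomial

theorem stmt9 (F : Type) [Field F] [Fintype F]
    (Q : F[X]) (hQm : Q.Monic) (hQirr : Irreducible Q) (hQX : Q ≠ X)
    (e : ℕ) (he : 0 < e)
    (N : ℕ) (hNpos : 0 < N) (hQdvd : Q ∣ X ^ N - 1)
    (hNmin : ∀ k : ℕ, 0 < k → Q ∣ X ^ k - 1 → N ≤ k) :
    (∃ A : F[X], ¬ Q ∣ A ∧ Q ^ e ∣ (X ^ N - (1 + A * Q))) ∧
      Ideal.span {AdjoinRoot.mk (Q ^ e) (X ^ N - 1)}
        = Ideal.span {AdjoinRoot.mk (Q ^ e) Q} := by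
  classical
  obtain ⟨p, hp⟩ := CharP.exists F
  haveI := hp
  haveI : Fact p.Prime := ⟨CharP.char_is_prime F p⟩
  have hpp : p.Prime := Fact.out
  have hN : (N : F) ≠ 0 := by
    intro h
    rw [CharP.cast_eq_zero_iff F p] at h
    obtain ⟨m, rfl⟩ := h
    have hm : 0 < m := by
      rcases Nat.eq_zero_or_pos m with h0 | h0
      · simp [h0] at hNpos
      · exact h0
    have hkey : (X : F[X]) ^ (p * m) - 1 = (X ^ m - 1) ^ p := by
      rw [sub_pow_char, ← pow_mul, one_pow, mul_comm]
    have hdvd : Q ∣ X ^ m - 1 :=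
      hQirr.prime.dvd_of_dvd_pow (hkey ▸ hQdvd)
    have := hNmin m hm hdvd
    nlinarith [hpp.two_le]
  have hsep : (X ^ N - 1 : F[X]).Separable := by
    have := Polynomial.separable_X_pow_sub_C (1 : F) hN one_ne_zero
    simpa using this
  have hsq : Squarefree (X ^ N - 1 : F[X]) := hsep.squarefree
  obtain ⟨A, hA⟩ := hQdvd
  have hQA : ¬ Q ∣ A := by
    rintro ⟨B, hB⟩
    exact hQirr.not_isUnit (hsq Q ⟨B, by rw [hA, hB]; ring⟩)
  refine ⟨⟨A, hQA, ?_⟩, ?_⟩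
  · have : X ^ N - (1 + A * Q) = 0 := by
      have : (X : F[X]) ^ N - 1 = Q * A := hA
      linear_combination this
    simp [this]
  · obtain ⟨u, v, huv⟩ : IsCoprime (Q ^ e) A :=
      (hQirr.coprime_iff_not_dvd.mpr hQA).pow_left
    refine le_antisymm (Ideal.span_singleton_le_span_singleton.mpr ?_)
      (Ideal.span_singleton_le_span_singleton.mpr ?_)
    · exact ⟨AdjoinRoot.mk (Q ^ e) A, by rw [← map_mul, ← hA]⟩
    · refine ⟨AdjoinRoot.mk (Q ^ e) v, ?_⟩
      have h1 : AdjoinRoot.mk (Q ^ e) (Q ^ e) = 0 := AdjoinRoot.mk_self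
      calc AdjoinRoot.mk (Q ^ e) Q
          = AdjoinRoot.mk (Q ^ e) (Q * (v * A) + (Q * u) * Q ^ e) := by
            congr 1; linear_combination (-Q) * huv
        _ = AdjoinRoot.mk (Q ^ e) (X ^ N - 1) * AdjoinRoot.mk (Q ^ e) v := by
            simp only [map_add, map_mul, h1, mul_zero, add_zero, hA]; ring
end

section
/- Let q = p^f be a prime power, e a positive integer, and ℓ a positive integer dividing p^{⌈log_p e⌉} with ℓ < e. Let V = 𝔽_q[X]/((X−1)^e) and let α be multiplication by X on V. For 0 ≤ i ≤ ℓ−1, define V_i to be the 𝔽_q-span of the residues (X−1)^{i+ℓj} mod (X−1)^e for 0 ≤ j ≤ ⌊(e−1−i)/ℓ⌋. Write e = aℓ + b with a > 0 and 0 ≤ b ≤ ℓ−1. Then V = ⨁_{i=0}^{ℓ−1} V_i, each V_i is invariant under α^ℓ, and the minimal polynomial of the restriction of α^ℓ to V_i is (X−1)^{a+1} if 0 ≤ i ≤ b−1 and (X−1)^a if b ≤ i ≤ ℓ−1. -/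
open Polynomial

noncomputable def shiftIso (F : Type) [Field F] (e : ℕ) :
    AdjoinRoot (((X : F[X]) - 1) ^ e) ≃ₐ[F] AdjoinRoot ((X : F[X]) ^ e) :=
  AlgEquiv.ofAlgHom
    (AdjoinRoot.liftAlgHom _ (Algebra.ofId _ _) (AdjoinRoot.root _ + 1) (by
      show aeval _ _ = 0
      simp only [map_pow, map_sub, map_one, aeval_X, add_sub_cancel_right]
      rw [← AdjoinRoot.mk_X, ← map_pow, AdjoinRoot.mk_self]))
    (AdjoinRoot.liftAlgHom _ (Algebra.ofId _ _) (AdjoinRoot.root _ - 1) (by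
      show aeval _ _ = 0
      rw [aeval_X_pow, ← map_one (AdjoinRoot.mk (((X : F[X]) - 1) ^ e)),
        ← AdjoinRoot.mk_X, ← map_sub, ← map_pow, AdjoinRoot.mk_self]))
    (by
      apply AdjoinRoot.algHom_ext
      simp [AdjoinRoot.liftAlgHom_root])
    (by
      apply AdjoinRoot.algHom_ext
      simp [AdjoinRoot.liftAlgHom_root])

lemma shiftIso_symm_root (F : Type) [Field F] (e : ℕ) :
    (shiftIso F e).symm (AdjoinRoot.root _) = AdjoinRoot.root _ - 1 := by
  simp [shiftIso, AdjoinRoot.liftAlgHom_root]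

noncomputable def tBasis (F : Type) [Field F] (e : ℕ) :
    Module.Basis (Fin e) F (AdjoinRoot (((X : F[X]) - 1) ^ e)) :=
  ((AdjoinRoot.powerBasis' (monic_X_pow e (R := F))).basis.map
      (shiftIso F e).symm.toLinearEquiv).reindex
    (finCongr (by simp))

lemma tBasis_apply (F : Type) [Field F] (e : ℕ) (k : Fin e) :
    tBasis F e k = (AdjoinRoot.root (((X : F[X]) - 1) ^ e) - 1) ^ (k : ℕ) := by
  simp only [tBasis, Module.Basis.reindex_apply, Module.Basis.map_apply, PowerBasis.coe_basis,
    AdjoinRoot.powerBasis'_gen, AlgEquiv.toLinearEquiv_apply, map_pow, shiftIso_symm_root]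
  congr 1

theorem stmt10 (p : ℕ) (hp : p.Prime) (F : Type) [Field F] [Fintype F] [CharP F p]
    (e : ℕ) (he : 0 < e)
    (ℓ : ℕ) (hℓpos : 0 < ℓ) (hℓdvd : ℓ ∣ p ^ Nat.clog p e) (hℓe : ℓ < e)
    (a b : ℕ) (ha : 0 < a) (hb : b < ℓ) (heab : e = a * ℓ + b)
    (V : Fin ℓ → Submodule F (AdjoinRoot (((X : F[X]) - 1) ^ e)))
    (hV : ∀ i, V i = Submodule.span F
      ((fun j : ℕ => AdjoinRoot.mk (((X : F[X]) - 1) ^ e)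
          (((X : F[X]) - 1) ^ ((i : ℕ) + ℓ * j))) ''
        {j | j ≤ (e - 1 - (i : ℕ)) / ℓ})) :
    DirectSum.IsInternal V ∧
    ∀ i, ∃ h : ∀ v ∈ V i,
        (LinearMap.mulLeft F (((AdjoinRoot.root (((X : F[X]) - 1) ^ e)) ^ ℓ : AdjoinRoot (((X : F[X]) - 1) ^ e)))) v ∈ V i,
      minpoly F ((LinearMap.mulLeft F
            ((AdjoinRoot.root (((X : F[X]) - 1) ^ e)) ^ ℓ : AdjoinRoot (((X : F[X]) - 1) ^ e))).restrict h)
        = ((X : F[X]) - 1) ^ (if (i : ℕ) < b then a + 1 else a) := by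
  classical
  haveI : Fact p.Prime := ⟨hp⟩
  set t : AdjoinRoot (((X : F[X]) - 1) ^ e) :=
    AdjoinRoot.root (((X : F[X]) - 1) ^ e) - 1 with htdef
  have hdegne : ((((X : F[X]) - 1)) ^ e).degree ≠ 0 := by
    rw [degree_pow, show ((X : F[X]) - 1) = X - C 1 by rw [C_1], degree_X_sub_C,
      nsmul_eq_mul, mul_one]
    exact_mod_cast (by omega : e ≠ 0)
  haveI : CharP (AdjoinRoot (((X : F[X]) - 1) ^ e)) p :=
    charP_of_injective_algebraMap
      (by rw [AdjoinRoot.algebraMap_eq]; exact AdjoinRoot.coe_injective hdegne) p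
  obtain ⟨m, -, hm⟩ := (Nat.dvd_prime_pow hp).mp hℓdvd
  have hfrob : (AdjoinRoot.root (((X : F[X]) - 1) ^ e)) ^ ℓ = t ^ ℓ + 1 := by
    have hr : AdjoinRoot.root (((X : F[X]) - 1) ^ e) = t + 1 := by rw [htdef]; ring
    rw [hr, hm, add_pow_char_pow, one_pow]
  have hmk : ∀ k : ℕ, AdjoinRoot.mk (((X : F[X]) - 1) ^ e) (((X : F[X]) - 1) ^ k) = t ^ k := by
    intro k
    rw [map_pow, map_sub, AdjoinRoot.mk_X, map_one]
  have hte : t ^ e = 0 := by rw [← hmk, AdjoinRoot.mk_self]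
  have htzero : ∀ k, e ≤ k → t ^ k = 0 := fun k hk => by
    rw [← Nat.sub_add_cancel hk, pow_add, hte, mul_zero]
  have hB : ∀ k : Fin e, tBasis F e k = t ^ (k : ℕ) := fun k => tBasis_apply F e k
  have htne : ∀ k, k < e → t ^ k ≠ 0 := by
    intro k hk
    rw [← hB ⟨k, hk⟩]
    exact (tBasis F e).ne_zero _
  set J : Fin ℓ → ℕ := fun i => (e - 1 - (i : ℕ)) / ℓ with hJdef
  have hile : ∀ i : Fin ℓ, (i : ℕ) ≤ e - 1 := fun i => by have := i.isLt; omega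
  have hmem : ∀ (i : Fin ℓ) (j : ℕ), j ≤ J i ↔ (i : ℕ) + ℓ * j ≤ e - 1 := by
    intro i j
    show j ≤ (e - 1 - (i : ℕ)) / ℓ ↔ _
    rw [Nat.le_div_iff_mul_le hℓpos, mul_comm, Nat.le_sub_iff_add_le (hile i),
      Nat.add_comm (ℓ * j) (i : ℕ)]
  have hJle : ∀ i : Fin ℓ, (i : ℕ) + ℓ * J i ≤ e - 1 := fun i => (hmem i (J i)).mp le_rfl
  have hJgt : ∀ i : Fin ℓ, e ≤ (i : ℕ) + ℓ * (J i + 1) := by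
    intro i
    by_contra hc
    push_neg at hc
    have h1 : (i : ℕ) + ℓ * (J i + 1) ≤ e - 1 := Nat.le_sub_one_of_lt hc
    exact Nat.not_succ_le_self (J i) ((hmem i (J i + 1)).mpr h1)
  have hVgen : ∀ i, V i =
      Submodule.span F ((fun j : ℕ => t ^ ((i : ℕ) + ℓ * j)) '' {j | j ≤ J i}) := by
    intro i
    have hfun : (fun j : ℕ => AdjoinRoot.mk (((X : F[X]) - 1) ^ e)
        (((X : F[X]) - 1) ^ ((i : ℕ) + ℓ * j))) = fun j : ℕ => t ^ ((i : ℕ) + ℓ * j) :=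
      funext fun j => hmk _
    rw [hV i, hfun]
  -- spans via the basis
  set S : Fin ℓ → Set (Fin e) := fun i => {k : Fin e | (k : ℕ) % ℓ = (i : ℕ)} with hS
  have hVS : ∀ i, V i = Submodule.span F (⇑(tBasis F e) '' S i) := by
    intro i
    rw [hVgen i]
    congr 1
    ext x
    simp only [Set.mem_image, Set.mem_setOf_eq, hS]
    constructor
    · rintro ⟨j, hj, rfl⟩
      have hlt : (i : ℕ) + ℓ * j < e :=
        lt_of_le_of_lt ((hmem i j).mp hj) (Nat.sub_lt he one_pos)
      refine ⟨⟨(i : ℕ) + ℓ * j, hlt⟩, ?_, ?_⟩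
      · show ((i : ℕ) + ℓ * j) % ℓ = (i : ℕ)
        rw [Nat.add_mul_mod_self_left, Nat.mod_eq_of_lt i.isLt]
      · rw [hB]
    · rintro ⟨k, hk, rfl⟩
      have hkeq : (i : ℕ) + ℓ * ((k : ℕ) / ℓ) = (k : ℕ) := by
        rw [← hk]; exact Nat.mod_add_div _ _
      refine ⟨(k : ℕ) / ℓ, ?_, ?_⟩
      · exact (hmem i _).mpr (by rw [hkeq]; exact Nat.le_sub_one_of_lt k.isLt)
      · rw [hB, hkeq]
  have hindep : iSupIndep V := by
    rw [iSupIndep_def]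
    intro i
    have hdisj : Disjoint (Submodule.span F (⇑(tBasis F e) '' S i))
        (Submodule.span F (⇑(tBasis F e) '' (S i)ᶜ)) :=
      (tBasis F e).linearIndependent.disjoint_span_image disjoint_compl_right
    refine Disjoint.mono (hVS i).le ?_ hdisj
    refine iSup₂_le fun j hj => ?_
    rw [hVS j]
    refine Submodule.span_mono (Set.image_mono ?_)
    intro k hk
    simp only [hS, Set.mem_setOf_eq] at hk
    simp only [Set.mem_compl_iff, hS, Set.mem_setOf_eq, hk]
    exact fun h => hj (Fin.ext h)
  have hsup : ⨆ i, V i = ⊤ := by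
    rw [eq_top_iff, ← (tBasis F e).span_eq]
    refine Submodule.span_le.mpr ?_
    rintro x ⟨k, rfl⟩
    have hi : (k : ℕ) % ℓ < ℓ := Nat.mod_lt _ hℓpos
    refine Submodule.mem_iSup_of_mem ⟨(k : ℕ) % ℓ, hi⟩ ?_
    rw [hVS]
    exact Submodule.subset_span ⟨k, rfl, rfl⟩
  refine ⟨DirectSum.isInternal_submodule_of_iSupIndep_of_iSup_eq_top hindep hsup, ?_⟩
  intro i
  have hEgen : ∀ j : ℕ, t ^ ℓ * t ^ ((i : ℕ) + ℓ * j) ∈ V i := by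
    intro j
    rw [← pow_add, show ℓ + ((i : ℕ) + ℓ * j) = (i : ℕ) + ℓ * (j + 1) by ring]
    by_cases hj1 : j + 1 ≤ J i
    · rw [hVgen i]; exact Submodule.subset_span ⟨j + 1, hj1, rfl⟩
    · have hge : e ≤ (i : ℕ) + ℓ * (j + 1) :=
        Nat.le_of_pred_lt (not_le.mp (mt (hmem i (j + 1)).mpr hj1))
      rw [htzero _ hge]
      exact Submodule.zero_mem _
  have hinv : ∀ v ∈ V i,
      (LinearMap.mulLeft F (((AdjoinRoot.root (((X : F[X]) - 1) ^ e)) ^ ℓ : AdjoinRoot (((X : F[X]) - 1) ^ e)))) v ∈ V i := by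
    intro v hv
    rw [LinearMap.mulLeft_apply, hfrob, add_mul, one_mul]
    refine Submodule.add_mem _ ?_ hv
    have hv' : v ∈ Submodule.span F
        ((fun j : ℕ => t ^ ((i : ℕ) + ℓ * j)) '' {j | j ≤ J i}) := by rwa [hVgen i] at hv
    refine Submodule.span_induction (p := fun x _ => t ^ ℓ * x ∈ V i) ?_ ?_ ?_ ?_ hv'
    · rintro x ⟨j, hj, rfl⟩
      exact hEgen j
    · show t ^ ℓ * 0 ∈ V i
      rw [mul_zero]; exact Submodule.zero_mem _
    · intro x y _ _ hx hy
      show t ^ ℓ * (x + y) ∈ V i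
      rw [mul_add]; exact Submodule.add_mem _ hx hy
    · intro r x _ hx
      show t ^ ℓ * (r • x) ∈ V i
      rw [mul_smul_comm]; exact Submodule.smul_mem _ _ hx
  refine ⟨hinv, ?_⟩
  set g := (LinearMap.mulLeft F
      ((AdjoinRoot.root (((X : F[X]) - 1) ^ e)) ^ ℓ : AdjoinRoot (((X : F[X]) - 1) ^ e))).restrict hinv with hg
  have hcoe1 : ∀ w : V i, (((g - 1) w : V i) : AdjoinRoot (((X : F[X]) - 1) ^ e))
      = t ^ ℓ * (w : AdjoinRoot (((X : F[X]) - 1) ^ e)) := by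
    intro w
    rw [LinearMap.sub_apply, Module.End.one_apply]
    rw [AddSubgroupClass.coe_sub, hg, LinearMap.restrict_coe_apply, LinearMap.mulLeft_apply,
      hfrob, add_mul, one_mul, add_sub_cancel_right]
  have hpow : ∀ (n : ℕ) (w : V i), ((((g - 1) ^ n) w : V i) : AdjoinRoot (((X : F[X]) - 1) ^ e))
      = t ^ (ℓ * n) * (w : AdjoinRoot (((X : F[X]) - 1) ^ e)) := by
    intro n
    induction n with
    | zero => intro w; simp
    | succ n ih =>
      intro w
      rw [pow_succ, Module.End.mul_apply, ih, hcoe1, ← mul_assoc, ← pow_add,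
        show ℓ * n + ℓ = ℓ * (n + 1) by ring]
  have hker : ∀ v ∈ V i, t ^ (ℓ * (J i + 1)) * v = 0 := by
    intro v hv
    have hv' : v ∈ Submodule.span F
        ((fun j : ℕ => t ^ ((i : ℕ) + ℓ * j)) '' {j | j ≤ J i}) := by rwa [hVgen i] at hv
    refine Submodule.span_induction (p := fun x _ => t ^ (ℓ * (J i + 1)) * x = 0) ?_ ?_ ?_ ?_ hv'
    · rintro x ⟨j, hj, rfl⟩
      rw [← pow_add]
      apply htzero
      refine le_trans (hJgt i) ?_
      rw [Nat.add_comm (ℓ * (J i + 1)) ((i : ℕ) + ℓ * j), Nat.add_comm (i : ℕ) (ℓ * j)]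
      calc (i : ℕ) + ℓ * (J i + 1) ≤ ((i : ℕ) + ℓ * j) + ℓ * (J i + 1) := by
            exact Nat.add_le_add_right (Nat.le_add_right _ _) _
        _ = ℓ * j + (i : ℕ) + ℓ * (J i + 1) := by rw [Nat.add_comm (i : ℕ) (ℓ * j)]
    · show t ^ (ℓ * (J i + 1)) * 0 = 0
      rw [mul_zero]
    · intro x y _ _ hx hy
      show t ^ (ℓ * (J i + 1)) * (x + y) = 0
      rw [mul_add, hx, hy, add_zero]
    · intro r x _ hx
      show t ^ (ℓ * (J i + 1)) * (r • x) = 0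
      rw [mul_smul_comm, hx, smul_zero]
  have hgd : (g - 1) ^ (J i + 1) = 0 := by
    ext w
    rw [LinearMap.zero_apply]
    have h0 : ((((g - 1) ^ (J i + 1)) w : V i) : AdjoinRoot (((X : F[X]) - 1) ^ e)) = 0 := by
      rw [hpow]; exact hker _ w.2
    simp [h0]
  have hmon1 : ((X : F[X]) - 1).Monic := by
    rw [show ((X : F[X]) - 1) = X - C 1 by rw [C_1]]
    exact monic_X_sub_C 1
  have haev : (aeval g) (((X : F[X]) - 1) ^ (J i + 1)) = 0 := by
    rw [map_pow, map_sub, aeval_X, map_one, hgd]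
  have hint : IsIntegral F g := ⟨((X : F[X]) - 1) ^ (J i + 1), hmon1.pow _, haev⟩
  have hdvd : minpoly F g ∣ ((X : F[X]) - 1) ^ (J i + 1) := minpoly.dvd F g haev
  have hprime : Prime ((X : F[X]) - 1) := by
    rw [show ((X : F[X]) - 1) = X - C 1 by rw [C_1]]
    exact Polynomial.prime_X_sub_C 1
  obtain ⟨n, hn, hassoc⟩ := (dvd_prime_pow hprime _).mp hdvd
  have heq : minpoly F g = ((X : F[X]) - 1) ^ n :=
    Polynomial.eq_of_monic_of_associated (minpoly.monic hint) (hmon1.pow n) hassoc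
  have hn' : n = J i + 1 := by
    by_contra hne
    have hnle : n ≤ J i := by omega
    have h0 : (aeval g) (((X : F[X]) - 1) ^ n) = 0 := by rw [← heq]; exact minpoly.aeval F g
    have hg0 : (g - 1) ^ n = 0 := by rwa [map_pow, map_sub, aeval_X, map_one] at h0
    have hw0mem : t ^ (i : ℕ) ∈ V i := by
      rw [hVgen i]
      refine Submodule.subset_span ⟨0, Nat.zero_le _, ?_⟩
      simp
    have hp0 := hpow n ⟨_, hw0mem⟩
    rw [hg0] at hp0
    simp only [LinearMap.zero_apply, ZeroMemClass.coe_zero] at hp0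
    rw [← pow_add] at hp0
    have hlt : ℓ * n + (i : ℕ) < e := by
      have h1 : ℓ * n ≤ ℓ * J i := Nat.mul_le_mul_left ℓ hnle
      have h2 : ℓ * J i + (i : ℕ) ≤ e - 1 := by rw [Nat.add_comm]; exact hJle i
      exact lt_of_le_of_lt (le_trans (Nat.add_le_add_right h1 _) h2) (Nat.sub_lt he one_pos)
    exact htne _ hlt hp0.symm
  rw [heq, hn']
  congr 1
  by_cases hib : (i : ℕ) < b
  · rw [if_pos hib]
    have h1 : e - 1 - (i : ℕ) = ℓ * a + (b - 1 - (i : ℕ)) := by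
      rw [heab, mul_comm a ℓ, Nat.add_sub_assoc (by omega : 1 ≤ b),
        Nat.add_sub_assoc (by omega : (i : ℕ) ≤ b - 1)]
    have h2 : J i = a := by
      show (e - 1 - (i : ℕ)) / ℓ = a
      rw [h1, Nat.mul_add_div hℓpos, Nat.div_eq_of_lt (by omega : b - 1 - (i : ℕ) < ℓ), add_zero]
    rw [h2]
  · rw [if_neg hib]
    have hbi : b ≤ (i : ℕ) := not_lt.mp hib
    have ha1 : ℓ * (a - 1) + ℓ = ℓ * a := by
      rw [← Nat.mul_succ]
      congr 1
      omega
    have h1 : e - 1 - (i : ℕ) = ℓ * (a - 1) + (ℓ + b - 1 - (i : ℕ)) := by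
      have hile' : (i : ℕ) ≤ ℓ + b - 1 := by have := i.isLt; omega
      rw [heab, mul_comm a ℓ, ← ha1, add_assoc,
        Nat.add_sub_assoc (by omega : 1 ≤ ℓ + b), Nat.add_sub_assoc hile']
    have h2 : J i = a - 1 := by
      show (e - 1 - (i : ℕ)) / ℓ = a - 1
      rw [h1, Nat.mul_add_div hℓpos,
        Nat.div_eq_of_lt (by have := i.isLt; omega : ℓ + b - 1 - (i : ℕ) < ℓ), add_zero]
    rw [h2]
    omega
end

section
/- Let q be a power of the prime p, let e be a positive integer, and let λ be the affine permutation of V = 𝔽_q[X]/((X−1)^e) given by λ(R) = X·R + U, where U ∈ V is a unit of the ring 𝔽_q[X]/((X−1)^e). Then every cycle of λ has length p^{⌊log_p e⌋ + 1}; equivalently, λ has exactly q^e / p^{⌊log_p e⌋+1} cycles, all of length p^{⌊log_p e⌋+1}. -/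
open Polynomial

private lemma rootMult_pow {F : Type} [Field F] (g : F[X]) (hg : g ≠ 0) (a : F) (n : ℕ) :
    rootMultiplicity a (g ^ n) = n * rootMultiplicity a g := by
  induction n with
  | zero =>
    simp only [pow_zero, Nat.zero_eq, zero_mul]
    exact rootMultiplicity_eq_zero (show ¬(1 : F[X]).IsRoot a by simp [Polynomial.IsRoot])
  | succ n ih =>
    rw [pow_succ, rootMultiplicity_mul (mul_ne_zero (pow_ne_zero _ hg) hg), ih]
    ring

theorem stmt12 (p : ℕ) (hp : p.Prime) (F : Type) [Field F] [Fintype F] [CharP F p]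
    (e : ℕ) (he : 0 < e)
    (U : AdjoinRoot (((X : F[X]) - 1) ^ e)) (hU : IsUnit U)
    (v : AdjoinRoot (((X : F[X]) - 1) ^ e)) :
    Function.minimalPeriod
        (fun R => AdjoinRoot.root (((X : F[X]) - 1) ^ e) * R + U) v
      = p ^ (Nat.log p e + 1) := by
  haveI : Fact p.Prime := ⟨hp⟩
  revert hU
  revert U v
  set f : F[X] := ((X : F[X]) - 1) ^ e with hf
  intro U v hU
  set r : AdjoinRoot f := AdjoinRoot.root f with hr
  set L := Nat.log p e with hL
  have hp1 : 1 < p := hp.one_lt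
  -- key polynomial divisibility fact
  have key : ∀ k : ℕ, 0 < k →
      ((f ∣ ∑ i ∈ Finset.range k, (X : F[X]) ^ i) ↔ p ^ (L + 1) ∣ k) := by
    intro k hk
    set a := k.factorization p with ha
    set m := ordCompl[p] k with hm
    have hkm : p ^ a * m = k := Nat.ordProj_mul_ordCompl_eq_self k p
    have hmne : m ≠ 0 := (Nat.ordCompl_pos p hk.ne').ne'
    have hpm : ¬ p ∣ m := Nat.not_dvd_ordCompl hp hk.ne'
    have hmF : (m : F) ≠ 0 := by
      rw [Ne, CharP.cast_eq_zero_iff F p m]; exact hpm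
    -- G = X^m - 1 has root multiplicity 1 at 1
    set G : F[X] := X ^ m - 1 with hG
    have hGC : G = X ^ m - C 1 := by rw [hG, map_one]
    have hGne : G ≠ 0 := by rw [hGC]; exact X_pow_sub_C_ne_zero (Nat.pos_of_ne_zero hmne) 1
    have hGroot : G.IsRoot 1 := by simp [hG, Polynomial.IsRoot]
    have hrmG : rootMultiplicity 1 G = 1 := by
      have h1 : 0 < rootMultiplicity 1 G := (rootMultiplicity_pos hGne).2 hGroot
      have h2 : ¬ 1 < rootMultiplicity 1 G := by
        rw [one_lt_rootMultiplicity_iff_isRoot hGne]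
        rintro ⟨-, hd⟩
        have : (derivative G).eval 1 = (m : F) := by
          simp [hG, derivative_X_pow]
        rw [Polynomial.IsRoot, this] at hd
        exact hmF hd
      omega
    -- X^k - 1 = G ^ (p ^ a)
    have hfact : (X : F[X]) ^ k - 1 = G ^ p ^ a := by
      rw [hG, sub_pow_char_pow, ← pow_mul, one_pow, mul_comm m, hkm]
    have hXk : ((X : F[X]) ^ k - 1) ≠ 0 := by
      have : (X : F[X]) ^ k - C 1 ≠ 0 := X_pow_sub_C_ne_zero hk 1
      rwa [map_one] at this
    have hrmXk : rootMultiplicity 1 ((X : F[X]) ^ k - 1) = p ^ a := by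
      rw [hfact, rootMult_pow G hGne 1 (p ^ a), hrmG, mul_one]
    -- geometric sum
    set S : F[X] := ∑ i ∈ Finset.range k, (X : F[X]) ^ i with hS
    have hgeom : S * ((X : F[X]) - 1) = (X : F[X]) ^ k - 1 := geom_sum_mul _ _
    have hSne : S ≠ 0 := by
      intro h; rw [h, zero_mul] at hgeom; exact hXk hgeom.symm
    have hX1 : ((X : F[X]) - 1) = X - C 1 := by rw [map_one]
    have hrmS : rootMultiplicity 1 S = p ^ a - 1 := by
      have hmul : rootMultiplicity 1 (S * ((X : F[X]) - 1))
          = rootMultiplicity 1 S + rootMultiplicity 1 ((X : F[X]) - 1) :=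
        rootMultiplicity_mul (hgeom ▸ hXk)
      rw [hgeom, hrmXk] at hmul
      have : rootMultiplicity 1 ((X : F[X]) - 1) = 1 := by
        rw [hX1, rootMultiplicity_X_sub_C_self]
      rw [this] at hmul
      omega
    have hpa : 1 ≤ p ^ a := Nat.one_le_pow _ _ hp.pos
    constructor
    · intro hdvd
      have : e ≤ rootMultiplicity 1 S := by
        rw [le_rootMultiplicity_iff hSne, ← hX1, ← hf]; exact hdvd
      rw [hrmS] at this
      have hlt : e < p ^ a := by omega
      have : L < a := (Nat.log_lt_iff_lt_pow hp1 he.ne').2 hlt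
      exact (hp.pow_dvd_iff_le_factorization hk.ne').2 (show L + 1 ≤ a by omega)
    · intro hdvd
      have hla : L + 1 ≤ a := (hp.pow_dvd_iff_le_factorization hk.ne').1 hdvd
      have hlt : e < p ^ a := by
        rw [← Nat.log_lt_iff_lt_pow hp1 he.ne']; omega
      have : e ≤ rootMultiplicity 1 S := by rw [hrmS]; omega
      rw [le_rootMultiplicity_iff hSne, ← hX1, ← hf] at this
      exact this
  -- nilpotency of r - 1, unit w
  have hnil : IsNilpotent (r - 1) := by
    refine ⟨e, ?_⟩
    rw [hr, ← AdjoinRoot.mk_X, ← map_one (AdjoinRoot.mk f), ← map_sub, ← map_pow, ← hf,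
      AdjoinRoot.mk_self]
  have hw : IsUnit ((r - 1) * v + U) :=
    IsNilpotent.isUnit_add_right_of_commute ((Commute.all _ _).isNilpotent_mul_right hnil)
      hU (Commute.all _ _)
  -- iterate formula
  have iter : ∀ k, (fun R => r * R + U)^[k] v
      = r ^ k * v + (∑ i ∈ Finset.range k, r ^ i) * U := by
    intro k
    induction k with
    | zero => simp
    | succ k ih =>
      rw [Function.iterate_succ_apply', ih, geom_sum_succ, pow_succ]
      ring
  -- characterization of periodic points
  have hiff : ∀ k, Function.IsPeriodicPt (fun R => r * R + U) k v ↔ p ^ (L + 1) ∣ k := by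
    intro k
    rcases Nat.eq_zero_or_pos k with rfl | hk
    · simp [Function.IsPeriodicPt, Function.IsFixedPt]
    · have heq : Function.IsPeriodicPt (fun R => r * R + U) k v
          ↔ (∑ i ∈ Finset.range k, r ^ i) * ((r - 1) * v + U) = 0 := by
        rw [Function.IsPeriodicPt, Function.IsFixedPt, iter k]
        constructor
        · intro h
          have h' : (r ^ k - 1) * v + (∑ i ∈ Finset.range k, r ^ i) * U = 0 := by
            rw [sub_mul, one_mul, sub_add_eq_add_sub, sub_eq_zero, h]
          rw [← geom_sum_mul r k] at h'
          rw [mul_add]; linear_combination h'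
        · intro h
          have h' : (r ^ k - 1) * v + (∑ i ∈ Finset.range k, r ^ i) * U = 0 := by
            rw [← geom_sum_mul r k]; linear_combination h
          rw [sub_mul, one_mul, sub_add_eq_add_sub, sub_eq_zero] at h'
          exact h'
      rw [heq, IsUnit.mul_left_eq_zero hw]
      have hmk : (∑ i ∈ Finset.range k, r ^ i)
          = AdjoinRoot.mk f (∑ i ∈ Finset.range k, (X : F[X]) ^ i) := by
        rw [map_sum]
        refine Finset.sum_congr rfl fun i _ => ?_
        rw [map_pow, AdjoinRoot.mk_X, ← hr]
      rw [hmk, AdjoinRoot.mk_eq_zero]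
      exact key k hk
  have hper : Function.IsPeriodicPt (fun R => r * R + U) (p ^ (L + 1)) v :=
    (hiff _).2 dvd_rfl
  exact Nat.dvd_antisymm (hper.minimalPeriod_dvd)
    ((hiff _).1 (Function.isPeriodicPt_minimalPeriod _ v))
end

section
/- Let q be a power of a prime p, let Q ∈ 𝔽_q[X] be monic irreducible with Q ≠ X and Q ≠ X − 1, let e be a positive integer, and let λ be the affine permutation of V = 𝔽_q[X]/(Q^e) given by λ(R) = XR + U for some fixed U ∈ V. Then every cycle of λ of length greater than 1 has length divisible by ord(Q); in particular, since ord(Q) > 1 is coprime to p, every nontrivial cycle length of λ is divisible by a prime different from p. -/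
open Polynomial

private lemma iter_affine {R : Type*} [CommRing R] (a U : R) (k : ℕ) (v : R) :
    (fun r => a * r + U)^[k] v = a ^ k * v + (∑ i ∈ Finset.range k, a ^ i) * U := by
  induction k with
  | zero => simp
  | succ k ih =>
    rw [Function.iterate_succ_apply', ih, geom_sum_succ]
    ring

private lemma dvd_of_dvd_pow_sub_one {F : Type} [Field F] (Q : F[X]) (N : ℕ) (hNpos : 0 < N)
    (hQdvd : Q ∣ X ^ N - 1) (hNmin : ∀ k : ℕ, 0 < k → Q ∣ X ^ k - 1 → N ≤ k)
    (m : ℕ) (hm : Q ∣ X ^ m - 1) : N ∣ m := by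
  rcases Nat.eq_zero_or_pos m with h0 | h0
  · simp [h0]
  have hr : Q ∣ X ^ (m % N) - 1 := by
    have h1 : (X : F[X]) ^ N - 1 ∣ (X ^ N) ^ (m / N) - (1 : F[X]) ^ (m / N) :=
      sub_dvd_pow_sub_pow _ _ _
    have h2 : Q ∣ X ^ (m % N) * ((X ^ N) ^ (m / N) - 1) :=
      Dvd.dvd.mul_left (hQdvd.trans (by simpa using h1)) _
    have key : (X : F[X]) ^ (m % N) - 1
        = (X ^ m - 1) - X ^ (m % N) * ((X ^ N) ^ (m / N) - 1) := by
      have hmod : m % N + N * (m / N) = m := Nat.mod_add_div m N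
      rw [← pow_mul, mul_sub, ← pow_add, hmod]
      ring
    rw [key]
    exact dvd_sub hm h2
  by_contra hnd
  have hpos : 0 < m % N := by
    rcases Nat.eq_zero_or_pos (m % N) with h | h
    · exact absurd (Nat.dvd_of_mod_eq_zero h) hnd
    · exact h
  exact absurd (hNmin _ hpos hr) (Nat.not_le.mpr (Nat.mod_lt _ hNpos))

theorem stmt18 (p : ℕ) (hp : p.Prime) (F : Type) [Field F] [Fintype F] [CharP F p]
    (Q : F[X]) (hQm : Q.Monic) (hQirr : Irreducible Q) (hQX : Q ≠ X) (hQ1 : Q ≠ X - 1)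
    (e : ℕ) (he : 0 < e)
    (N : ℕ) (hNpos : 0 < N) (hQdvd : Q ∣ X ^ N - 1)
    (hNmin : ∀ k : ℕ, 0 < k → Q ∣ X ^ k - 1 → N ≤ k)
    (U : AdjoinRoot (Q ^ e)) (v : AdjoinRoot (Q ^ e))
    (hv : 1 < Function.minimalPeriod (fun R => AdjoinRoot.root (Q ^ e) * R + U) v) :
    N ∣ Function.minimalPeriod (fun R => AdjoinRoot.root (Q ^ e) * R + U) v ∧
    ∃ r : ℕ, r.Prime ∧ r ≠ p ∧
      r ∣ Function.minimalPeriod (fun R => AdjoinRoot.root (Q ^ e) * R + U) v := by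
  haveI : Fact p.Prime := ⟨hp⟩
  set f : AdjoinRoot (Q ^ e) → AdjoinRoot (Q ^ e) :=
    fun R => AdjoinRoot.root (Q ^ e) * R + U with hf
  set m := Function.minimalPeriod f v with hmdef
  set a : AdjoinRoot (Q ^ e) := AdjoinRoot.root (Q ^ e) with ha
  have hmpos : 0 < m := lt_trans one_pos hv
  have hper : f^[m] v = v := Function.iterate_minimalPeriod
  -- Step 1: Q ∣ X^m - 1
  have hQXm : Q ∣ X ^ m - 1 := by
    by_contra hnd
    have hcop : IsCoprime ((X : F[X]) ^ m - 1) (Q ^ e) :=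
      hQirr.coprime_pow_of_not_dvd e hnd
    obtain ⟨c, d, hcd⟩ := hcop
    have hunit : (AdjoinRoot.mk (Q ^ e) c) * (a ^ m - 1) = 1 := by
      have hz : (AdjoinRoot.mk (Q ^ e)) Q ^ e = 0 := by
        rw [← map_pow, AdjoinRoot.mk_self]
      have := congrArg (AdjoinRoot.mk (Q ^ e)) hcd
      simpa [ha, map_add, map_mul, map_sub, map_pow, map_one, hz] using this
    have hiter : ∀ w, f^[m] w = a ^ m * w + (∑ i ∈ Finset.range m, a ^ i) * U :=
      fun w => iter_affine a U m w
    have hfv : f^[m] (f v) = f v := by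
      rw [← Function.iterate_succ_apply, Function.iterate_succ_apply', hper]
    have e1 := hper
    have e2 := hfv
    rw [hiter] at e1 e2
    have heq : (a ^ m - 1) * (v - f v) = 0 := by linear_combination e1 - e2
    have hvf : v = f v := by
      have := congrArg (fun z => (AdjoinRoot.mk (Q ^ e) c) * z) heq
      simp only [mul_zero] at this
      rw [← mul_assoc, hunit, one_mul] at this
      exact sub_eq_zero.mp this
    have h1 : Function.IsPeriodicPt f 1 v := by
      simpa [Function.IsPeriodicPt, Function.IsFixedPt] using hvf.symm
    have := Nat.le_of_dvd one_pos h1.minimalPeriod_dvd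
    omega
  have hNm : N ∣ m := dvd_of_dvd_pow_sub_one Q N hNpos hQdvd hNmin m hQXm
  refine ⟨hNm, ?_⟩
  -- N > 1
  have hN1 : N ≠ 1 := by
    intro h
    rw [h, pow_one] at hQdvd
    have hx1 : (X - 1 : F[X]) = X - C 1 := by simp
    have hassoc : Associated Q (X - 1) := by
      rw [hx1] at hQdvd ⊢
      exact hQirr.associated_of_dvd (Polynomial.irreducible_X_sub_C (1 : F)) hQdvd
    exact hQ1 (Polynomial.eq_of_monic_of_associated hQm
      (by rw [hx1]; exact monic_X_sub_C 1) hassoc)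
  -- p does not divide N
  have hpN : ¬ p ∣ N := by
    rintro ⟨t, ht⟩
    have htpos : 0 < t := by
      rcases Nat.eq_zero_or_pos t with h | h
      · rw [h, Nat.mul_zero] at ht; omega
      · exact h
    have hchar : ((X : F[X]) ^ t - 1) ^ p = X ^ N - 1 := by
      rw [sub_pow_char, ← pow_mul, one_pow, ht, Nat.mul_comm]
    have hQt : Q ∣ X ^ t - 1 :=
      hQirr.prime.dvd_of_dvd_pow (by rw [hchar]; exact hQdvd)
    have h1 := hNmin t htpos hQt
    have h2 : t < N := by nlinarith [hp.two_le]
    omega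
  exact ⟨N.minFac, Nat.minFac_prime hN1, fun h => hpN (h ▸ N.minFac_dvd),
    N.minFac_dvd.trans hNm⟩
end
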